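/- TwoProdFMA exactness: let p ≥ 1, let RN be a round-to-nearest function for precision p, and let a, b be precision-p binary floating-point numbers. Set x = RN(a·b) and e = RN(a·b − x) (one fused-multiply-add rounding). Then e = a·b − x exactly, so x + e = a·b, i.e. (x, e) is an exact length-2 expansion of the product a·b. -/
import Mathlib


/-- A precision-`p` binary floating-point number (unbounded exponent):
a real of the form `m * 2 ^ e` with `m e : ℤ` and `|m| < 2 ^ p`. -/
def FloatRep (p : ℕ) (x : ℝ) : Prop :=
  ∃ m e : ℤ, |m| < 2 ^ p ∧ x = (m : ℝ) * (2 : ℝ) ^ e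

/-- `RN` is a round-to-nearest function for precision `p`: `RN x` is a
precision-`p` float and is at least as close to `x` as any precision-`p`
float (ties broken arbitrarily). -/
def IsRoundNearest (p : ℕ) (RN : ℝ → ℝ) : Prop :=
  ∀ x : ℝ, FloatRep p (RN x) ∧ ∀ f : ℝ, FloatRep p f → |RN x - x| ≤ |f - x|

/-- For nonzero `x`, `ulp x = 2 ^ (⌊log₂ |x|⌋ - p + 1)`. -/
noncomputable def ulp (p : ℕ) (x : ℝ) : ℝ :=
  (2 : ℝ) ^ (Int.log 2 |x| - (p : ℤ) + 1)

lemma rn_fix {p : ℕ} {RN : ℝ → ℝ} (h : IsRoundNearest p RN) {y : ℝ}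
    (hy : FloatRep p y) : RN y = y := by
  have h2 := (h y).2 y hy
  rw [sub_self, abs_zero] at h2
  exact sub_eq_zero.mp (abs_eq_zero.mp (le_antisymm h2 (abs_nonneg _)))

lemma floatRep_zero (p : ℕ) : FloatRep p 0 :=
  ⟨0, 0, by simpa using pow_pos (by norm_num : (0:ℤ) < 2) p, by simp⟩

lemma floatRep_of_le (p : ℕ) (hp : 1 ≤ p) {K E : ℤ} (h : |K| ≤ 2 ^ p) :
    FloatRep p ((K : ℝ) * (2 : ℝ) ^ E) := by
  have h1 : (1 : ℤ) < 2 ^ p := by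
    calc (1:ℤ) < 2 ^ 1 := by norm_num
    _ ≤ 2 ^ p := pow_le_pow_right₀ (by norm_num) hp
  rcases lt_or_eq_of_le h with h | h
  · exact ⟨K, E, h, rfl⟩
  · rcases (abs_eq (by positivity)).mp h with rfl | rfl
    · refine ⟨1, E + p, by simpa using h1, ?_⟩
      rw [zpow_add₀ (two_ne_zero) E (p:ℤ), zpow_natCast]
      push_cast; ring
    · refine ⟨-1, E + p, by simpa using h1, ?_⟩
      rw [zpow_add₀ (two_ne_zero) E (p:ℤ), zpow_natCast]
      push_cast; ring

lemma odd_part_aux : ∀ n : ℕ, ∀ m : ℤ, m.natAbs ≤ n → m ≠ 0 →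
    ∃ M : ℤ, ∃ k : ℕ, Odd M ∧ |M| ≤ |m| ∧ m = M * 2 ^ k := by
  intro n
  induction n with
  | zero => intro m h hm; exfalso; omega
  | succ n ih =>
    intro m h hm
    rcases Int.even_or_odd m with he | ho
    · obtain ⟨m', hm'⟩ := he
      have hmm : m = 2 * m' := by omega
      have hne : m' ≠ 0 := by rintro rfl; simp [hmm] at hm
      have hnat : (2 * m').natAbs = 2 * m'.natAbs := by
        simp [Int.natAbs_mul]
      have hle : m'.natAbs ≤ n := by
        have := Int.natAbs_pos.mpr hne
        rw [hmm] at h; omega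
      obtain ⟨M, k, h1, h2, h3⟩ := ih m' hle hne
      refine ⟨M, k + 1, h1, ?_, by rw [hmm, h3]; ring⟩
      calc |M| ≤ |m'| := h2
      _ ≤ |m| := by rw [hmm, abs_mul, abs_two]; nlinarith [abs_nonneg m']
    · exact ⟨m, 0, ho, le_refl _, by simp⟩

lemma odd_part (m : ℤ) (hm : m ≠ 0) :
    ∃ M : ℤ, ∃ k : ℕ, Odd M ∧ |M| ≤ |m| ∧ m = M * 2 ^ k :=
  odd_part_aux m.natAbs m le_rfl hm

lemma chunk (q : ℕ) (M : ℤ) (hM : |M| < 2 ^ (2 * (1 + q))) :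
    ∃ H R : ℤ, |H| ≤ 2 ^ (1 + q) ∧ |R| ≤ 2 ^ q ∧ M = 2 ^ (1 + q) * H + R := by
  set P : ℤ := 2 ^ (1 + q) with hP
  have hPpos : (0:ℤ) < P := by positivity
  set H : ℤ := (M + 2 ^ q) / P with hH
  set R : ℤ := M - P * H with hR
  have hmod := Int.emod_nonneg (M + 2 ^ q) (ne_of_gt hPpos)
  have hmod2 := Int.emod_lt_of_pos (M + 2 ^ q) hPpos
  have hdm := Int.mul_ediv_add_emod (M + 2 ^ q) P
  rw [← hH] at hdm
  have hPq : P = 2 * 2 ^ q := by rw [hP, pow_add]; ring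
  have hRle : |R| ≤ 2 ^ q := by
    rw [abs_le]
    constructor <;> [skip; skip] <;> omega
  have hM2 : |M| < P * P := by
    have : (2:ℤ) ^ (2 * (1 + q)) = P * P := by
      rw [hP, ← pow_add]; ring_nf
    omega
  have hHle : |H| ≤ P := by
    by_contra hc
    push_neg at hc
    have h1 : P * |H| = |P * H| := by rw [abs_mul, abs_of_pos hPpos]
    have h2 : |P * H| ≤ |M| + |R| := by
      have : P * H = M - R := by omega
      rw [this]; exact abs_sub _ _
    have h3 : P * (P + 1) ≤ P * |H| := by
      apply mul_le_mul_of_nonneg_left _ (le_of_lt hPpos)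
      omega
    have h4 : (2:ℤ) ^ q < P := by omega
    nlinarith
  exact ⟨H, R, hHle, hRle, by omega⟩

lemma key (p : ℕ) (hp : 1 ≤ p) (RN : ℝ → ℝ) (hRN : IsRoundNearest p RN)
    (a b : ℝ) (ha : FloatRep p a) (hb : FloatRep p b) :
    FloatRep p (a * b - RN (a * b)) := by
  obtain ⟨q, rfl⟩ := Nat.exists_eq_add_of_le hp
  obtain ⟨ma, ea, hma, rfl⟩ := ha
  obtain ⟨mb, eb, hmb, rfl⟩ := hb
  by_cases h0 : ma * mb = 0
  · have hz : (ma:ℝ) * (2:ℝ)^ea * ((mb:ℝ) * (2:ℝ)^eb) = 0 := by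
      have h : ((ma * mb : ℤ) : ℝ) = 0 := by rw [h0]; simp
      push_cast at h
      rcases mul_eq_zero.mp h with h | h <;> rw [h] <;> ring
    rw [hz, rn_fix hRN (floatRep_zero _)]
    simpa using floatRep_zero _
  · obtain ⟨M, k, hModd, hMle, hMeq⟩ := odd_part (ma * mb) h0
    set E : ℤ := ea + eb + k with hEdef
    have hprod : (ma:ℝ) * (2:ℝ)^ea * ((mb:ℝ) * (2:ℝ)^eb) = (M:ℝ) * (2:ℝ)^E := by
      have hc : (ma:ℝ) * (mb:ℝ) = (M:ℝ) * (2:ℝ)^(k:ℕ) := by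
        exact_mod_cast congrArg (Int.cast : ℤ → ℝ) hMeq
      calc (ma:ℝ) * (2:ℝ)^ea * ((mb:ℝ) * (2:ℝ)^eb)
          = ((ma:ℝ) * (mb:ℝ)) * ((2:ℝ)^ea * (2:ℝ)^eb) := by ring
        _ = (M:ℝ) * (2:ℝ)^(k:ℕ) * (2:ℝ)^(ea + eb) := by
            rw [hc, ← zpow_add₀ (two_ne_zero : (2:ℝ) ≠ 0)]
        _ = (M:ℝ) * (2:ℝ)^E := by
            rw [hEdef, zpow_add₀ (two_ne_zero : (2:ℝ) ≠ 0) (ea+eb) (k:ℤ),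
              zpow_natCast]
            ring
    have hMlt : |M| < 2 ^ (2 * (1 + q)) := by
      have h1 : |ma| * |mb| < 2^(1+q) * 2^(1+q) :=
        mul_lt_mul'' hma hmb (abs_nonneg _) (abs_nonneg _)
      calc |M| ≤ |ma * mb| := hMle
        _ = |ma| * |mb| := abs_mul _ _
        _ < 2^(1+q) * 2^(1+q) := h1
        _ = 2 ^ (2 * (1 + q)) := by ring
    rw [hprod]
    by_cases hsmall : |M| < 2 ^ (1 + q)
    · rw [rn_fix hRN ⟨M, E, hsmall, rfl⟩, sub_self]
      exact floatRep_zero _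
    · push_neg at hsmall
      obtain ⟨H, R, hHle, hRle, hMHR⟩ := chunk q M hMlt
      set x := RN ((M:ℝ) * (2:ℝ)^E) with hxdef
      have hfH : FloatRep (1+q) ((H:ℝ) * (2:ℝ)^(E + ((1+q:ℕ):ℤ))) :=
        floatRep_of_le _ hp hHle
      have hb1 := (hRN ((M:ℝ) * (2:ℝ)^E)).2 _ hfH
      have hEpos : (0:ℝ) < (2:ℝ)^E := zpow_pos (by norm_num) _
      have hgap : (H:ℝ) * (2:ℝ)^(E + ((1+q:ℕ):ℤ)) - (M:ℝ) * (2:ℝ)^E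
          = (-(R:ℝ)) * (2:ℝ)^E := by
        have hMr : (M:ℝ) = 2^(1+q) * (H:ℝ) + (R:ℝ) := by exact_mod_cast congrArg (Int.cast : ℤ → ℝ) hMHR
        rw [zpow_add₀ (two_ne_zero : (2:ℝ) ≠ 0), zpow_natCast, hMr]
        ring
      have hRcast : |(R:ℝ)| ≤ (2:ℝ)^q := by exact_mod_cast hRle
      have ht : |x - (M:ℝ) * (2:ℝ)^E| ≤ (2:ℝ)^q * (2:ℝ)^E := by
        calc |x - (M:ℝ) * (2:ℝ)^E| ≤ _ := hb1
          _ = |(R:ℝ)| * (2:ℝ)^E := by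
              rw [hgap, abs_mul, abs_neg, abs_of_pos hEpos]
          _ ≤ (2:ℝ)^q * (2:ℝ)^E :=
              mul_le_mul_of_nonneg_right hRcast hEpos.le
      obtain ⟨m, e, hm, hxrep⟩ := (hRN ((M:ℝ) * (2:ℝ)^E)).1
      rw [← hxdef] at hxrep
      by_cases hEe : E ≤ e
      · set K : ℤ := M - m * 2 ^ (e - E).toNat with hK
        have h2eE : (2:ℝ)^(((e-E).toNat:ℕ):ℤ) * (2:ℝ)^E = (2:ℝ)^e := by
          rw [← zpow_add₀ (two_ne_zero : (2:ℝ) ≠ 0)]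
          congr 1
          rw [Int.toNat_of_nonneg (by omega)]
          ring
        have hKc : (K:ℝ) = (M:ℝ) - (m:ℝ) * (2:ℝ)^(((e-E).toNat:ℕ):ℤ) := by
          push_cast [hK]
          rw [zpow_natCast]
        have hKeq : (K:ℝ) * (2:ℝ)^E = (M:ℝ) * (2:ℝ)^E - x := by
          rw [hKc, hxrep, sub_mul, mul_assoc, h2eE]
        have hKabs : |K| < 2 ^ (1 + q) := by
          have h1 : |(K:ℝ)| * (2:ℝ)^E ≤ (2:ℝ)^q * (2:ℝ)^E := by
            rw [← abs_of_pos hEpos, ← abs_mul, hKeq, abs_sub_comm]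
            rw [abs_of_pos hEpos]
            exact ht
          have h2 : |(K:ℝ)| ≤ (2:ℝ)^q := le_of_mul_le_mul_right h1 hEpos
          have h3 : |K| ≤ 2^q := by exact_mod_cast h2
          calc |K| ≤ 2^q := h3
            _ < 2^(1+q) := by
                have : (2:ℤ)^(1+q) = 2 * 2^q := by rw [pow_add]; ring
                have hqpos : (0:ℤ) < 2^q := by positivity
                omega
        exact ⟨K, E, hKabs, hKeq.symm⟩
      · exfalso
        push_neg at hEe
        set u : ℝ := (2:ℝ)^(E-1) with hu
        have hupos : 0 < u := zpow_pos (by norm_num) _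
        have h2E : (2:ℝ)^E = 2 * u := by
          rw [hu, zpow_sub_one₀ (two_ne_zero : (2:ℝ) ≠ 0)]
          field_simp
        have heu : (2:ℝ)^e ≤ u := by
          rw [hu]
          exact zpow_le_zpow_right₀ one_le_two (by omega)
        have hmabs : |(m:ℝ)| ≤ 2^(1+q) - 1 := by
          have h4 : |m| ≤ 2^(1+q) - 1 := by omega
          exact_mod_cast h4
        have hMabs : (2:ℝ)^(1+q) ≤ |(M:ℝ)| := by exact_mod_cast hsmall
        have hxabs : |x| ≤ ((2:ℝ)^(1+q) - 1) * u := by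
          rw [hxrep, abs_mul, abs_of_pos (zpow_pos (by norm_num : (0:ℝ) < 2) e)]
          have h7 : (1:ℝ) ≤ 2^(1+q) := one_le_pow₀ (by norm_num)
          exact mul_le_mul hmabs heu (zpow_pos (by norm_num) e).le
            (by linarith)
        have h5 : |(M:ℝ)| * (2 * u) - |x| ≤ |x - (M:ℝ) * (2:ℝ)^E| := by
          have h6 := abs_sub_abs_le_abs_sub ((M:ℝ) * (2:ℝ)^E) x
          rw [abs_sub_comm] at h6
          have h7 : |(M:ℝ) * (2:ℝ)^E| = |(M:ℝ)| * (2 * u) := by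
            rw [abs_mul, abs_of_pos hEpos, h2E]
          rw [h7] at h6
          linarith
        have hq1 : (2:ℝ)^(1+q) = 2 * 2^q := by rw [pow_add]; ring
        have hint : (2:ℝ)^(1+q) * u ≤ |(M:ℝ)| * u :=
          mul_le_mul_of_nonneg_right hMabs hupos.le
        rw [hq1] at hint hxabs
        rw [h2E] at ht h5
        nlinarith [ht, h5, hxabs, hint, hupos]

/-- TwoProdFMA exactness: one FMA rounding recovers the exact product error. -/
theorem twoprod_fma_exact (p : ℕ) (hp : 1 ≤ p) (RN : ℝ → ℝ)
    (hRN : IsRoundNearest p RN) (a b : ℝ)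
    (ha : FloatRep p a) (hb : FloatRep p b)
    (x e : ℝ) (hx : x = RN (a * b)) (he : e = RN (a * b - x)) :
    e = a * b - x ∧ x + e = a * b := by
  have hkey : FloatRep p (a * b - x) := by
    rw [hx]; exact key p hp RN hRN a b ha hb
  have he' : e = a * b - x := by rw [he, rn_fix hRN hkey]
  exact ⟨he', by rw [he']; ring⟩
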